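/- arXiv:2304.06543 — 2 statements merged into one kernel-verified Lean document; each statement's English description precedes it below -/
import Mathlib

section
/- Necessity of no negative cycles: if the allotment subspace multigraph Γ(A) of a feasible strict-LBDD allotment A contains a simple directed cycle of negative total cost, then A is not optimal; specifically, performing the cyclic reassignment along that cycle yields a feasible allotment of strictly smaller total cost. -/
/-!
The cyclic reassignment `A'` is `A` precomposed with a permutation of the demand units (rotate
`d` along the cycle, fix everything else). Precomposing with a bijection does not change how many
units a service center receives, so `A'` stays feasible; and since `A'` differs from `A` only on
the cycle, its total cost differs from that of `A` by exactly the cost of the cycle.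
-/

/-- Load of service center `s` under allotment `A`. -/
def load {D S : Type*} [Fintype D] [DecidableEq S] (A : D → S) (s : S) : ℕ :=
  (Finset.univ.filter fun x => A x = s).card

theorem Equiv.Perm.eq_comp_viaEmbedding {ι D S : Type*} (e : Perm ι) (f : ι ↪ D)
    {A A' : D → S} (h_on : ∀ i, A' (f i) = A (f (e i)))
    (h_off : ∀ x ∉ Set.range f, A' x = A x) :
    A' = A ∘ e.viaEmbedding f := by
  funext x
  by_cases hx : x ∈ Set.range f
  · obtain ⟨i, rfl⟩ := hx
    rw [Function.comp_apply, viaEmbedding_apply, h_on]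
  · rw [Function.comp_apply, viaEmbedding_apply_of_notMem _ _ _ hx, h_off x hx]

theorem load_comp_perm {D S : Type*} [Fintype D] [DecidableEq S] (A : D → S) (σ : Equiv.Perm D)
    (t : S) : load (A ∘ σ) t = load A t :=
  Finset.card_equiv σ (by simp)

theorem Fintype.sum_sub_sum_eq_sum_comp_of_eqOn_compl_range {ι D M : Type*} [Fintype ι]
    [Fintype D] [AddCommGroup M] (g h : D → M) {f : ι → D} (hf : Function.Injective f)
    (h_off : ∀ x ∉ Set.range f, g x = h x) :
    ∑ x, g x - ∑ x, h x = ∑ i, (g (f i) - h (f i)) := by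
  rw [← Finset.sum_sub_distrib]
  exact (Fintype.sum_of_injective f hf _ _ (fun x hx => sub_eq_zero.2 (h_off x hx))
    fun _ => rfl).symm

theorem neg_cycle_gives_better_feasible_allotment_general {D S : Type*}
    [Fintype D] [DecidableEq S]
    (CM : D → S → ℤ) (c : S → ℕ)
    (A : D → S) (hA : ∀ s : S, load A s ≤ c s)
    (m : ℕ) (s : Fin m → S) (d : Fin m → D)
    (hd : Function.Injective d)
    (hAd : ∀ i, A (d i) = s i)
    (hneg : (∑ i : Fin m, (CM (d i) (s (finRotate m i)) - CM (d i) (s i))) < 0)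
    (A' : D → S)
    (hA'1 : ∀ i, A' (d i) = s (finRotate m i))
    (hA'2 : ∀ x : D, (∀ i, x ≠ d i) → A' x = A x) :
    (∀ t : S, load A' t ≤ c t) ∧ (∑ x : D, CM x (A' x)) < ∑ x : D, CM x (A x) := by
  have h_off : ∀ x ∉ Set.range d, A' x = A x :=
    fun x hx => hA'2 x fun i hi => hx ⟨i, hi.symm⟩
  have h_perm : A' = A ∘ (finRotate m).viaEmbedding ⟨d, hd⟩ :=
    Equiv.Perm.eq_comp_viaEmbedding _ ⟨d, hd⟩ (fun i => by simp [hA'1, hAd]) h_off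
  refine ⟨fun t => by rw [h_perm, load_comp_perm]; exact hA t, ?_⟩
  have h_cost := Fintype.sum_sub_sum_eq_sum_comp_of_eqOn_compl_range
    (fun x => CM x (A' x)) (fun x => CM x (A x)) hd fun x hx => by rw [h_off x hx]
  simp only [hA'1, hAd] at h_cost
  linarith

theorem neg_cycle_gives_better_feasible_allotment {D S : Type*}
    [Fintype D] [Fintype S] [DecidableEq D] [DecidableEq S]
    (CM : D → S → ℤ) (c : S → ℕ)
    (A : D → S) (hA : ∀ s : S, load A s ≤ c s)
    (m : ℕ) (hm : 0 < m) (s : Fin m → S) (d : Fin m → D)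
    (hs : Function.Injective s) (hd : Function.Injective d)
    (hAd : ∀ i, A (d i) = s i)
    (hneg : (∑ i : Fin m, (CM (d i) (s (finRotate m i)) - CM (d i) (s i))) < 0)
    (A' : D → S)
    (hA'1 : ∀ i, A' (d i) = s (finRotate m i))
    (hA'2 : ∀ x : D, (∀ i, x ≠ d i) → A' x = A x) :
    (∀ t : S, load A' t ≤ c t) ∧ (∑ x : D, CM x (A' x)) < ∑ x : D, CM x (A x) :=
  neg_cycle_gives_better_feasible_allotment_general CM c A hA m s d hd hAd hneg A' hA'1 hA'2
end

section
/- If allotments A and B have equal loads at every service center and the total cost of B is strictly less than that of A, then the allotment subspace multigraph Γ(A) contains a directed cycle of negative total weight. -/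
/-!
Matching the fibres of `A` and `B` gives a permutation `σ` of `D` with `A ∘ σ = B`. The weights
`w d = CM d (A (σ d)) - CM d (A d)` then add up to `cost B - cost A < 0`, and the orbit
`d, σ d, …, σ^(m-1) d` of each `d` traces a closed walk in `Γ(A)` of weight
`∑ i < m, w (σ^i d)`. Some orbit has negative weight: `∑ d, ∑ i < orderOf σ, w (σ^i d)` is
`orderOf σ` times the total weight, while its inner sum is a multiple of the orbit weight of `d`.
-/

open Finset Function MulAction

theorem exists_perm_comp_eq_of_card_fiber_eq {α β : Type*} [Fintype α] [DecidableEq β]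
    {A B : α → β} (h : ∀ b, #{x | A x = b} = #{x | B x = b}) :
    ∃ σ : Equiv.Perm α, ∀ x, A (σ x) = B x :=
  ⟨Equiv.ofFiberEquiv fun b => Fintype.equivOfCardEq <| by
      rw [Fintype.card_subtype, Fintype.card_subtype, h b],
    Equiv.ofFiberEquiv_map _⟩

theorem Fin.val_finRotate {n : ℕ} (i : Fin n) : (finRotate n i : ℕ) = (i + 1) % n := by
  cases n with
  | zero => exact i.elim0
  | succ n => rw [finRotate_apply, Fin.val_add, Fin.val_one', Nat.add_mod_mod]

theorem Function.Periodic.sum_range_mul {M : Type*} [AddCommMonoid M] {g : ℕ → M} {m : ℕ}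
    (hg : Periodic g m) (k : ℕ) : ∑ i ∈ range (k * m), g i = k • ∑ i ∈ range m, g i := by
  induction k with
  | zero => simp
  | succ k ih =>
    rw [Nat.succ_mul, sum_range_add, ih, succ_nsmul]
    congr 1
    refine sum_congr rfl fun i _ => ?_
    rw [add_comm]
    simpa using hg.nat_mul k i

namespace MulAction

variable {G α M : Type*} [AddCommMonoid M]

section Monoid

variable [Monoid G] [MulAction G α]

theorem injective_pow_smul_fin_period (g : G) (x : α) :
    Injective fun i : Fin (period g x) => g ^ (i : ℕ) • x := fun i j hij =>
  Fin.ext <| iterate_injOn_Iio_minimalPeriod i.isLt j.isLt <| by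
    simpa only [smul_iterate_apply] using hij

theorem pow_finRotate_smul (g : G) (x : α) (i : Fin (period g x)) :
    g ^ (finRotate _ i : ℕ) • x = g • g ^ (i : ℕ) • x := by
  rw [Fin.val_finRotate, pow_mod_period_smul, pow_succ', mul_smul]

theorem sum_range_orderOf_pow_smul_eq_nsmul (g : G) (x : α) (f : α → M) :
    ∑ i ∈ range (orderOf g), f (g ^ i • x) =
      (orderOf g / period g x) • ∑ i ∈ range (period g x), f (g ^ i • x) := by
  conv_lhs => rw [← Nat.div_mul_cancel (period_dvd_orderOf g x)]
  exact Periodic.sum_range_mul (fun i => by simp only [pow_add_period_smul]) _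

end Monoid

variable [Group G] [MulAction G α] [Fintype α]

theorem sum_sum_range_orderOf_pow_smul (g : G) (f : α → M) :
    ∑ x, ∑ i ∈ range (orderOf g), f (g ^ i • x) = orderOf g • ∑ x, f x := by
  rw [sum_comm]
  calc ∑ i ∈ range (orderOf g), ∑ x, f (g ^ i • x) = ∑ _i ∈ range (orderOf g), ∑ x, f x :=
        sum_congr rfl fun i _ => Equiv.sum_comp (toPerm (g ^ i)) f
    _ = orderOf g • ∑ x, f x := by rw [sum_const, card_range]

theorem exists_sum_range_period_pow_smul_neg [LinearOrder M] [IsOrderedAddMonoid M] {g : G}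
    (hg : IsOfFinOrder g) {f : α → M} (hf : ∑ x, f x < 0) : ∃ x, ∑ i ∈ range (period g x), f (g ^ i • x) < 0 := by
  have hsum : ∑ x, ∑ i ∈ range (orderOf g), f (g ^ i • x) < ∑ _x : α, 0 := by
    rw [sum_sum_range_orderOf_pow_smul, sum_const_zero]
    exact nsmul_neg hf hg.orderOf_pos.ne'
  obtain ⟨x, -, hx⟩ := exists_lt_of_sum_lt hsum
  rw [sum_range_orderOf_pow_smul_eq_nsmul] at hx
  exact ⟨x, lt_of_not_ge fun h => hx.not_ge (nsmul_nonneg h _)⟩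

end MulAction

theorem cheaper_equal_load_allotment_gives_neg_cycle_general {D S : Type*}
    [Fintype D] [DecidableEq S]
    (CM : D → S → ℤ) (A B : D → S)
    (hload : ∀ s : S, (Finset.univ.filter fun x => A x = s).card
      = (Finset.univ.filter fun x => B x = s).card)
    (hcost : (∑ x : D, CM x (B x)) < ∑ x : D, CM x (A x)) :
    ∃ (m : ℕ) (d : Fin m → D) (s : Fin m → S), 0 < m ∧
      Function.Injective d ∧ (∀ i, A (d i) = s i) ∧
      (∑ i : Fin m, (CM (d i) (s (finRotate m i)) - CM (d i) (s i))) < 0 := by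
  obtain ⟨σ, hσ⟩ := exists_perm_comp_eq_of_card_fiber_eq hload
  have hmove : ∑ x, (CM x (A (σ x)) - CM x (A x)) < 0 := by
    simpa only [hσ, sum_sub_distrib, sub_neg] using hcost
  obtain ⟨x, hx⟩ := exists_sum_range_period_pow_smul_neg (isOfFinOrder_of_finite σ) hmove
  refine ⟨period σ x, fun i => σ ^ (i : ℕ) • x, fun i => A (σ ^ (i : ℕ) • x),
    period_pos_of_orderOf_pos (orderOf_pos σ) x, injective_pow_smul_fin_period σ x,
    fun _ => rfl, ?_⟩
  rw [← Fin.sum_univ_eq_sum_range] at hx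
  simpa only [pow_finRotate_smul, Equiv.Perm.smul_def] using hx

theorem cheaper_equal_load_allotment_gives_neg_cycle {D S : Type*}
    [Fintype D] [DecidableEq D] [DecidableEq S]
    (CM : D → S → ℤ) (A B : D → S)
    (hload : ∀ s : S, (Finset.univ.filter fun x => A x = s).card
      = (Finset.univ.filter fun x => B x = s).card)
    (hcost : (∑ x : D, CM x (B x)) < ∑ x : D, CM x (A x)) :
    ∃ (m : ℕ) (d : Fin m → D) (s : Fin m → S), 0 < m ∧
      Function.Injective d ∧ (∀ i, A (d i) = s i) ∧
      (∑ i : Fin m, (CM (d i) (s (finRotate m i)) - CM (d i) (s i))) < 0 :=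
  cheaper_equal_load_allotment_gives_neg_cycle_general CM A B hload hcost
end
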